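/- arXiv:2506.07201 — 4 statements merged into one kernel-verified Lean document; each statement's English description precedes it below -/
import Mathlib

section
/- Let k ≥ 2. The maps r and s on 𝕊_{k−1} defined below satisfy the dihedral relations r^k = Id, s² = Id and (r∘s)² = Id, where Id is the identity map of 𝕊_{k−1}; hence they generate an action of the dihedral group D_k on 𝕊_{k−1}. -/
open Finset

attribute [local instance] Classical.propDecidable

noncomputable section

/-- `π` is a permutation of `{1,…,k-1}` given in one-line notation
(`π p` is the entry at position `p`), normalized to `0` outside `[1,k-1]`. -/
def OneLine (k : ℕ) (π : ℕ → ℕ) : Prop :=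
  Set.BijOn π (Set.Icc 1 (k - 1)) (Set.Icc 1 (k - 1)) ∧
    ∀ p, p ∉ Set.Icc 1 (k - 1) → π p = 0

/-- The set `S(π)` of adjacent inversions of `π`:
those `i ∈ [1,k-2]` such that `i+1` appears before `i` in `π`. -/
def adjInvF (k : ℕ) (π : ℕ → ℕ) : Finset ℕ :=
  (Finset.Icc 1 (k - 2)).filter fun i =>
    ∃ p ∈ Finset.Icc 1 (k - 1), ∃ r ∈ Finset.Icc 1 (k - 1),
      p < r ∧ π p = i + 1 ∧ π r = i

/-- `W^π_{k,q}`: weakly increasing `(k-1)`-tuples with entries in `[0,q-1]`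
that are strictly increasing at every adjacent inversion of `π`
(vectors are functions `ℕ → ℕ` supported on `[1,k-1]`). -/
def W (k q : ℕ) (π : ℕ → ℕ) : Set (ℕ → ℕ) :=
  {v | (∀ i, i ∉ Finset.Icc 1 (k - 1) → v i = 0) ∧
       (∀ i ∈ Finset.Icc 1 (k - 1), v i ≤ q - 1) ∧
       (∀ i, 1 ≤ i → i + 1 ≤ k - 1 → v i ≤ v (i + 1)) ∧
       (∀ i ∈ adjInvF k π, v i < v (i + 1))}

/-- `x + e_{π_a} + e_{π_{a+1}} + ⋯ + e_{π_{b-1}}`. -/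
def shift (π : ℕ → ℕ) (a b : ℕ) (x : ℕ → ℕ) : ℕ → ℕ :=
  fun i => x i + if i ∈ (Finset.Icc a (b - 1)).image π then 1 else 0

/-- Adjacency in the graph `G^π_{k,q}`: one vertex is obtained from the other
by adding `e_{π_a} + ⋯ + e_{π_{b-1}}` for some `1 ≤ a < b ≤ k`. -/
def AdjRel (k : ℕ) (π : ℕ → ℕ) (x y : ℕ → ℕ) : Prop :=
  ∃ a b, 1 ≤ a ∧ a < b ∧ b ≤ k ∧ (y = shift π a b x ∨ x = shift π a b y)

/-- The number of maximal blocks of consecutive integers of a finite set `T ⊆ ℕ`. -/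
def numBlocks (T : Finset ℕ) : ℕ := (T.filter fun t => t + 1 ∉ T).card

/-- `cs_i(π)`: the number of pairs `1 ≤ a < b ≤ k` such that
`T_{a,b} = {π_a,…,π_{b-1}}` decomposes into exactly `i` maximal blocks
of consecutive integers. -/
def cs (k : ℕ) (π : ℕ → ℕ) (i : ℕ) : ℕ :=
  ((Finset.Icc 1 k ×ˢ Finset.Icc 1 k).filter fun p =>
    p.1 < p.2 ∧ numBlocks ((Finset.Icc p.1 (p.2 - 1)).image π) = i).card

/-- For `i < j`, `{i,j}` is an edge of `G_π` iff `{i,i+1,…,j-1}` occurs as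
a set of consecutive entries of `π`. -/
def GpiEdge (k : ℕ) (π : ℕ → ℕ) (i j : ℕ) : Prop :=
  ∃ a, 1 ≤ a ∧ a + (j - i) ≤ k ∧
    (Finset.Icc a (a + (j - i) - 1)).image π = Finset.Icc i (j - 1)

/-- Unordered adjacency in `G_π`. -/
def GpiAdjU (k : ℕ) (π : ℕ → ℕ) (i j : ℕ) : Prop :=
  (i < j ∧ GpiEdge k π i j) ∨ (j < i ∧ GpiEdge k π j i)

/-- The position of the value `v` in the one-line notation of `π`. -/
def posOf (k : ℕ) (π : ℕ → ℕ) (v : ℕ) : ℕ :=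
  if h : ((Finset.Icc 1 (k - 1)).filter fun t => π t = v).Nonempty then
    ((Finset.Icc 1 (k - 1)).filter fun t => π t = v).min' h
  else 0

/-- The rotation `r` on one-line permutations: if `π = π₁…π_{t-1}(k-1)π_{t+1}…π_{k-1}`,
then `r(π) = (π_{t+1}+1)…(π_{k-1}+1) 1 (π₁+1)…(π_{t-1}+1)`. -/
def rot (k : ℕ) (π : ℕ → ℕ) : ℕ → ℕ := fun p =>
  if p ∉ Finset.Icc 1 (k - 1) then 0
  else if p < k - posOf k π (k - 1) then π (posOf k π (k - 1) + p) + 1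
  else if p = k - posOf k π (k - 1) then 1
  else π (p - (k - posOf k π (k - 1))) + 1

/-- The reflection `s` on one-line permutations: if `π = π₁…π_{i-1} 1 π_{i+1}…π_{k-1}`,
then `s(π) = (k+1-π_{i-1})…(k+1-π₁) 1 (k+1-π_{k-1})…(k+1-π_{i+1})`. -/
def srefl (k : ℕ) (π : ℕ → ℕ) : ℕ → ℕ := fun p =>
  if p ∉ Finset.Icc 1 (k - 1) then 0
  else if p < posOf k π 1 then k + 1 - π (posOf k π 1 - p)
  else if p = posOf k π 1 then 1
  else k + 1 - π (k + posOf k π 1 - p)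

/-- The rotation `ρ` of the vertex set `{1,…,k}`. -/
def rotV (k i : ℕ) : ℕ := if i < k then i + 1 else 1

/-- The reflection `σ` of the vertex set `{1,…,k}`. -/
def sreflV (k i : ℕ) : ℕ := if i = 1 then 1 else k + 2 - i

/-- The maximal sorted family `(S₁,…,S_k)` associated with `σ`, `0`-indexed:
`sortedFam k σ (i-1) = S_i`. -/
def sortedFam (k : ℕ) (σ : ℕ → ℕ) : ℕ → Finset ℕ
  | 0 => insert 1 ((adjInvF k σ).image (· + 1))
  | j + 1 => insert (σ (j + 1) + 1) ((sortedFam k σ j).erase (σ (j + 1)))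

/-- `ear(π)`. -/
def ear (k : ℕ) (π : ℕ → ℕ) : ℕ :=
  ((Finset.Icc 1 (k - 2)).filter fun i => π (i + 1) = π i + 1 ∨ π i = π (i + 1) + 1).card
    + (({1, k - 1} : Finset ℕ) ∩ ({π 1, π (k - 1)} : Finset ℕ)).card

/-- `ε_i(π) = 1` if `i-1 ∈ S(π)` and `0` otherwise. -/
def eps (k : ℕ) (π : ℕ → ℕ) (i : ℕ) : ℕ := if i - 1 ∈ adjInvF k π then 1 else 0

/-- Extension of a vector with the conventions `x_k = q-1` (`x₀ = 0` holds by
the normalization of vectors in `W^π_{k,q}`). -/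
def xext (k q : ℕ) (x : ℕ → ℕ) (i : ℕ) : ℕ := if i = k then q - 1 else x i

/-- The label list `L^π(x) = {i ∈ [1,k] : x_{i-1} < x_i - ε_i(π)}`. -/
def labels (k q : ℕ) (π : ℕ → ℕ) (x : ℕ → ℕ) : Finset ℕ :=
  (Finset.Icc 1 k).filter fun i => xext k q x (i - 1) + eps k π i < xext k q x i

/-- A Sperner labeling of `G^π_{k,q}`. -/
def IsSperner (k q : ℕ) (π : ℕ → ℕ) (f : (ℕ → ℕ) → ℕ) : Prop :=
  (∀ x ∈ W k q π, f x = 0 ∨ f x ∈ labels k q π x) ∧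
  (∀ x ∈ W k q π, ∀ y ∈ W k q π, AdjRel k π x y → f x = f y ∨ f x = 0 ∨ f y = 0)

/-- The entry `w` appears between the entries `u` and `v` in `π`. -/
def Between (k : ℕ) (π : ℕ → ℕ) (u v w : ℕ) : Prop :=
  (posOf k π u < posOf k π w ∧ posOf k π w < posOf k π v) ∨
  (posOf k π v < posOf k π w ∧ posOf k π w < posOf k π u)

/-- A good set of colors for `π`. -/
def GoodSet (k : ℕ) (π : ℕ → ℕ) (C : Finset ℕ) : Prop :=
  C ⊆ Finset.Icc 1 k ∧
  (∀ i ∈ C, ∀ j ∈ C, i ≠ j → ¬ GpiAdjU k π i j) ∧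
  (∀ a ∈ C, ∀ b ∈ C, 1 < a → a < b → b < k →
      ((Between k π (a - 1) b a ∨ Between k π (a - 1) b (b - 1)) ∧
       (Between k π (b - 1) a (a - 1) ∨ Between k π (b - 1) a b))) ∧
  (1 ∈ C → ∀ b ∈ C, b ≠ 1 → Between k π 1 (b - 1) b) ∧
  (k ∈ C → ∀ b ∈ C, b ≠ k → Between k π b (k - 1) (b - 1))

/-- `x_a - x_{a-1} - ε_a(π)`, the `a`-th coordinate of the distance map `D`. -/
def dval (k q : ℕ) (π : ℕ → ℕ) (x : ℕ → ℕ) (a : ℕ) : ℕ :=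
  xext k q x a - xext k q x (a - 1) - eps k π a

/-- The distance coloring determined by a set of colors `C`:
`x` gets color `a ∈ C` if `dval x a` is the unique maximum of `dval x` on `C`,
and `0` otherwise. -/
def dcol (k q : ℕ) (π : ℕ → ℕ) (C : Finset ℕ) (x : ℕ → ℕ) : ℕ :=
  if h : ∃ a ∈ C, ∀ b ∈ C, b ≠ a → dval k q π x b < dval k q π x a then h.choose else 0

/-!
Extend a one-line permutation `π` of `{1,…,k-1}` by `0 ↦ 0` to a permutation `π̂` of `ZMod k`.
Then `r` and `s` become `π̂ ↦ π̂(· + t) + 1` and `π̂ ↦ 1 - π̂(i - ·)`, where `t` and `i` are the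
positions of `k-1` and `1`, i.e. the shifts that keep `0 ↦ 0`. Maps `x ↦ u·f(u·x + c) + a`
compose like the affine maps `y ↦ u·y + a`, so each of `r^k`, `s²`, `(r∘s)²` sends `π̂` to
`π̂(· + c)` for some `c`; since the result again fixes `0`, `c = 0`.
-/

section Twist

variable {R : Type*} [CommRing R]

def twist (u a c : R) (f : R → R) : R → R := fun x => u * f (u * x + c) + a

theorem twist_twist (u a c u' a' c' : R) (f : R → R) :
    twist u' a' c' (twist u a c f) = twist (u' * u) (u' * a + a') (u * c' + c) f := by
  funext x
  simp only [twist]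
  rw [show u * (u' * x + c') + c = u' * u * x + (u * c' + c) by ring]
  ring

theorem twist_injective {u : R} (hu : IsUnit u) (a c : R) {f : R → R}
    (hf : Function.Injective f) : Function.Injective (twist u a c f) := fun _ _ hxy =>
  hu.mul_left_cancel (add_right_cancel (hf (hu.mul_left_cancel (add_right_cancel hxy))))

theorem twist_one_zero_eq_self {c : R} {f : R → R} (hf : Function.Injective f) (h0 : f 0 = 0)
    (hc : twist 1 0 c f 0 = 0) : twist 1 0 c f = f := by
  simp only [twist, one_mul, mul_zero, zero_add, add_zero] at hc
  obtain rfl : c = 0 := hf (hc.trans h0.symm)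
  funext x
  simp [twist]

end Twist

def liftZMod (k : ℕ) (π : ℕ → ℕ) : ZMod k → ZMod k := fun x => (π x.val : ZMod k)

@[simp]
theorem liftZMod_natCast (k : ℕ) (π : ℕ → ℕ) (n : ℕ) : liftZMod k π n = π (n % k) := by
  simp [liftZMod, ZMod.val_natCast]

namespace OneLine

variable {k : ℕ} {π π' : ℕ → ℕ}

theorem apply_zero (hπ : OneLine k π) : π 0 = 0 :=
  hπ.2 0 (by simp)

theorem apply_lt [NeZero k] (hπ : OneLine k π) (p : ℕ) : π p < k := by
  by_cases hp : p ∈ Set.Icc 1 (k - 1)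
  · have := hπ.1.1 hp
    simp only [Set.mem_Icc] at this
    omega
  · rw [hπ.2 p hp]
    exact Nat.pos_of_neZero k

theorem injOn_Iio [NeZero k] (hπ : OneLine k π) : Set.InjOn π (Set.Iio k) := by
  have hk := Nat.pos_of_neZero k
  rw [show Set.Iio k = insert 0 (Set.Icc 1 (k - 1)) by ext; simp; omega,
    Set.injOn_insert (by simp)]
  refine ⟨hπ.1.2.1, ?_⟩
  rintro ⟨j, hj, hj0⟩
  have := hπ.1.1 hj
  simp only [Set.mem_Icc, hj0, hπ.apply_zero] at this
  omega

theorem liftZMod_zero (hπ : OneLine k π) : liftZMod k π 0 = 0 := by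
  simp [liftZMod, hπ.apply_zero]

theorem liftZMod_injective [NeZero k] (hπ : OneLine k π) : Function.Injective (liftZMod k π) := by
  intro x y hxy
  have hval := congrArg ZMod.val hxy
  simp only [liftZMod, ZMod.val_cast_of_lt (hπ.apply_lt _)] at hval
  exact ZMod.val_injective k (hπ.injOn_Iio x.val_lt y.val_lt hval)

theorem eq_of_liftZMod_eq [NeZero k] (hπ : OneLine k π) (hπ' : OneLine k π')
    (h : liftZMod k π = liftZMod k π') : π = π' := by
  funext p
  by_cases hp : p < k
  · have hval := congrArg ZMod.val (congrFun h p)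
    simpa [Nat.mod_eq_of_lt hp, ZMod.val_cast_of_lt (hπ.apply_lt _),
      ZMod.val_cast_of_lt (hπ'.apply_lt _)] using hval
  · have hp' : p ∉ Set.Icc 1 (k - 1) := by simp only [Set.mem_Icc]; omega
    rw [hπ.2 p hp', hπ'.2 p hp']

theorem eq_of_liftZMod_eq_twist [NeZero k] (hπ' : OneLine k π') (hπ : OneLine k π)
    (h : ∃ c, liftZMod k π' = twist 1 0 c (liftZMod k π)) : π' = π := by
  obtain ⟨c, h⟩ := h
  refine hπ'.eq_of_liftZMod_eq hπ
    (h.trans (twist_one_zero_eq_self hπ.liftZMod_injective hπ.liftZMod_zero ?_))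
  rw [← h, hπ'.liftZMod_zero]

theorem of_liftZMod_injective [NeZero k]
    (h0 : ∀ p, p ∉ Set.Icc 1 (k - 1) → π p = 0) (hle : ∀ p, π p ≤ k)
    (hinj : Function.Injective (liftZMod k π)) : OneLine k π := by
  have hcast : ∀ {p q : ℕ}, p < k → q < k → (p : ZMod k) = q → p = q := fun hp hq h => by
    simpa [ZMod.val_cast_of_lt hp, ZMod.val_cast_of_lt hq] using congrArg ZMod.val h
  have hπ0 : π 0 = 0 := h0 0 (by simp)
  have hmaps : Set.MapsTo π (Set.Icc 1 (k - 1)) (Set.Icc 1 (k - 1)) := by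
    intro p hp
    simp only [Set.mem_Icc] at hp ⊢
    by_contra hout
    have hzero : ((π p : ℕ) : ZMod k) = 0 := by
      rcases (show π p = 0 ∨ π p = k by have := hle p; omega) with h | h <;> simp [h]
    have hp0 : (p : ZMod k) = ((0 : ℕ) : ZMod k) :=
      hinj (by
        rw [liftZMod_natCast, liftZMod_natCast, Nat.mod_eq_of_lt (by omega), Nat.zero_mod, hπ0,
          hzero, Nat.cast_zero])
    exact absurd (hcast (by omega) (Nat.pos_of_neZero k) hp0) (by omega)
  have hinjOn : Set.InjOn π (Set.Icc 1 (k - 1)) := by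
    intro p hp q hq hpq
    simp only [Set.mem_Icc] at hp hq
    refine hcast (by omega) (by omega) (hinj ?_)
    simp [Nat.mod_eq_of_lt (by omega : p < k), Nat.mod_eq_of_lt (by omega : q < k), hpq]
  exact ⟨((Set.finite_Icc _ _).injOn_iff_bijOn_of_mapsTo hmaps).mp hinjOn, h0⟩

theorem posOf_spec (hπ : OneLine k π) {v : ℕ} (hv : v ∈ Set.Icc 1 (k - 1)) :
    posOf k π v ∈ Set.Icc 1 (k - 1) ∧ π (posOf k π v) = v := by
  obtain ⟨t, ht, hπt⟩ := hπ.1.surjOn hv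
  have hne : ((Finset.Icc 1 (k - 1)).filter fun t => π t = v).Nonempty :=
    ⟨t, by simpa using ⟨ht, hπt⟩⟩
  rw [posOf, dif_pos hne]
  simpa using Finset.min'_mem _ hne

theorem natCast_rot_apply (hk : 2 ≤ k) (hπ : OneLine k π) {p : ℕ} (hp : p < k) :
    ((rot k π p : ℕ) : ZMod k) = π ((p + posOf k π (k - 1)) % k) + 1 := by
  obtain ⟨hT, hπT⟩ := hπ.posOf_spec (v := k - 1) (by simp only [Set.mem_Icc]; omega)
  simp only [Set.mem_Icc] at hT
  unfold rot
  set T := posOf k π (k - 1)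
  rcases Nat.eq_zero_or_pos p with rfl | hp0
  · rw [if_pos (by simp), zero_add, Nat.mod_eq_of_lt (by omega), hπT, Nat.cast_sub (by omega)]
    simp
  rw [if_neg (by simp only [Finset.mem_Icc, not_not]; omega)]
  split_ifs
  · rw [Nat.mod_eq_of_lt (by omega), add_comm p T, Nat.cast_add_one]
  · rw [show p + T = k by omega, Nat.mod_self, hπ.apply_zero]
    simp
  · rw [Nat.mod_eq_sub_mod (by omega), Nat.mod_eq_of_lt (by omega),
      show p + T - k = p - (k - T) by omega, Nat.cast_add_one]

theorem natCast_srefl_apply (hk : 2 ≤ k) (hπ : OneLine k π) {p : ℕ} (hp : p < k) :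
    ((srefl k π p : ℕ) : ZMod k) = 1 - π ((posOf k π 1 + k - p) % k) := by
  have : NeZero k := ⟨by omega⟩
  obtain ⟨hI, hπI⟩ := hπ.posOf_spec (v := 1) (by simp only [Set.mem_Icc]; omega)
  simp only [Set.mem_Icc] at hI
  have hcast : ∀ n ≤ k + 1, ((k + 1 - n : ℕ) : ZMod k) = 1 - n := fun n hn => by
    push_cast [Nat.cast_sub hn, ZMod.natCast_self]
    ring
  unfold srefl
  set I := posOf k π 1
  rcases Nat.eq_zero_or_pos p with rfl | hp0
  · rw [if_pos (by simp), Nat.sub_zero, Nat.add_mod_right, Nat.mod_eq_of_lt (by omega), hπI]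
    simp
  rw [if_neg (by simp only [Finset.mem_Icc, not_not]; omega)]
  split_ifs
  · rw [show I + k - p = I - p + k by omega, Nat.add_mod_right, Nat.mod_eq_of_lt (by omega),
      hcast _ (by have := hπ.apply_lt (I - p); omega)]
  · rw [show I + k - p = k by omega, Nat.mod_self, hπ.apply_zero]
    simp
  · rw [Nat.mod_eq_of_lt (by omega), show I + k - p = k + I - p by omega,
      hcast _ (by have := hπ.apply_lt (k + I - p); omega)]

theorem liftZMod_rot (hk : 2 ≤ k) (hπ : OneLine k π) :
    liftZMod k (rot k π) = twist 1 1 (posOf k π (k - 1) : ZMod k) (liftZMod k π) := by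
  have : NeZero k := ⟨by omega⟩
  funext x
  obtain ⟨p, hp, rfl⟩ : ∃ p < k, (p : ZMod k) = x := ⟨x.val, x.val_lt, x.natCast_zmod_val⟩
  rw [liftZMod_natCast, Nat.mod_eq_of_lt hp, hπ.natCast_rot_apply hk hp, twist, one_mul, one_mul,
    ← Nat.cast_add, liftZMod_natCast]

theorem liftZMod_srefl (hk : 2 ≤ k) (hπ : OneLine k π) :
    liftZMod k (srefl k π) = twist (-1) 1 (posOf k π 1 : ZMod k) (liftZMod k π) := by
  have : NeZero k := ⟨by omega⟩
  funext x
  obtain ⟨p, hp, rfl⟩ : ∃ p < k, (p : ZMod k) = x := ⟨x.val, x.val_lt, x.natCast_zmod_val⟩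
  rw [liftZMod_natCast, Nat.mod_eq_of_lt hp, hπ.natCast_srefl_apply hk hp, twist,
    show -1 * (p : ZMod k) + (posOf k π 1 : ℕ) = ((posOf k π 1 + k - p : ℕ) : ZMod k) by
      push_cast [Nat.cast_sub (show p ≤ posOf k π 1 + k by omega), ZMod.natCast_self]
      ring,
    liftZMod_natCast]
  ring

end OneLine

theorem oneLine_rot {k : ℕ} {π : ℕ → ℕ} (hk : 2 ≤ k) (hπ : OneLine k π) : OneLine k (rot k π) := by
  have : NeZero k := ⟨by omega⟩
  refine OneLine.of_liftZMod_injective (fun p hp => ?_) (fun p => ?_) ?_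
  · unfold rot
    rw [if_pos (by simpa using hp)]
  · have := hπ.apply_lt
    unfold rot
    split_ifs <;> grind
  · rw [hπ.liftZMod_rot hk]
    exact twist_injective isUnit_one _ _ hπ.liftZMod_injective

theorem oneLine_srefl {k : ℕ} {π : ℕ → ℕ} (hk : 2 ≤ k) (hπ : OneLine k π) :
    OneLine k (srefl k π) := by
  have : NeZero k := ⟨by omega⟩
  refine OneLine.of_liftZMod_injective (fun p hp => ?_) (fun p => ?_) ?_
  · unfold srefl
    rw [if_pos (by simpa using hp)]
  · obtain ⟨hI, -⟩ := hπ.posOf_spec (v := 1) (by simp only [Set.mem_Icc]; omega)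
    have hpos : ∀ j ∈ Set.Icc 1 (k - 1), 1 ≤ π j := fun j hj => (hπ.1.1 hj).1
    simp only [Set.mem_Icc] at hI hpos
    unfold srefl
    split_ifs with hout <;> simp only [Finset.mem_Icc] at hout
    · have := hpos (posOf k π 1 - p) ⟨by omega, by omega⟩
      omega
    · omega
    · have := hpos (k + posOf k π 1 - p) ⟨by omega, by omega⟩
      omega
    · omega
  · rw [hπ.liftZMod_srefl hk]
    exact twist_injective isUnit_one.neg _ _ hπ.liftZMod_injective

theorem OneLine.iterate_rot {k : ℕ} {π : ℕ → ℕ} (hk : 2 ≤ k) (hπ : OneLine k π) :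
    ∀ m : ℕ, OneLine k ((rot k)^[m] π) ∧
      ∃ c, liftZMod k ((rot k)^[m] π) = twist 1 (m : ZMod k) c (liftZMod k π)
  | 0 => ⟨hπ, 0, by funext x; simp [twist]⟩
  | m + 1 => by
    obtain ⟨hm, c, hc⟩ := hπ.iterate_rot hk m
    have h := hm.liftZMod_rot hk
    rw [hc, twist_twist, mul_one, one_mul, one_mul, ← Nat.cast_add_one] at h
    rw [Function.iterate_succ_apply']
    exact ⟨oneLine_rot hk hm, _, h⟩

theorem stmt9 (k : ℕ) (hk : 2 ≤ k) :
    (∀ π, OneLine k π → (rot k)^[k] π = π) ∧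
    (∀ π, OneLine k π → srefl k (srefl k π) = π) ∧
    (∀ π, OneLine k π → rot k (srefl k (rot k (srefl k π))) = π) := by
  have : NeZero k := ⟨by omega⟩
  refine ⟨fun π hπ => ?_, fun π hπ => ?_, fun π hπ => ?_⟩
  · obtain ⟨hπk, c, hc⟩ := hπ.iterate_rot hk k
    rw [ZMod.natCast_self] at hc
    exact hπk.eq_of_liftZMod_eq_twist hπ ⟨c, hc⟩
  · have hs := oneLine_srefl hk hπ
    have h := hs.liftZMod_srefl hk
    rw [hπ.liftZMod_srefl hk, twist_twist] at h
    norm_num at h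
    exact (oneLine_srefl hk hs).eq_of_liftZMod_eq_twist hπ ⟨_, h⟩
  · have hs := oneLine_srefl hk hπ
    have hrs := oneLine_rot hk hs
    have hsrs := oneLine_srefl hk hrs
    have h := hsrs.liftZMod_rot hk
    rw [hrs.liftZMod_srefl hk, hs.liftZMod_rot hk, hπ.liftZMod_srefl hk,
      twist_twist, twist_twist, twist_twist] at h
    norm_num at h
    exact (oneLine_rot hk hsrs).eq_of_liftZMod_eq_twist hπ ⟨_, h⟩

end
end

section
/- Let k ≥ 2 and π ∈ 𝕊_{k−1}. Then the rotation ρ of {1,…,k} is a graph isomorphism from G_π to G_{r(π)} and the reflection σ of {1,…,k} is a graph isomorphism from G_π to G_{s(π)}; that is, for all i ≠ j in {1,…,k}, {i,j} is an edge of G_π if and only if {ρ(i), ρ(j)} is an edge of G_{r(π)}, and {i,j} is an edge of G_π if and only if {σ(i), σ(j)} is an edge of G_{s(π)}. -/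
open Finset

attribute [local instance] Classical.propDecidable

noncomputable section

namespace Stmt10Aux

open Finset

variable {k : ℕ} [NeZero k] {π : ℕ → ℕ}

lemma castval (p : ZMod k) : ((p.val : ℕ) : ZMod k) = p := ZMod.natCast_rightInverse p

/-- Cyclic arcs in `ZMod k`. -/
def arc (s : ZMod k) (len : ℕ) : Finset (ZMod k) :=
  (Finset.range len).image (fun t : ℕ => s + (t : ZMod k))

lemma mem_arc {s x : ZMod k} {len : ℕ} :
    x ∈ arc s len ↔ ∃ t, t < len ∧ x = s + (t : ZMod k) := by
  simp only [arc, Finset.mem_image, Finset.mem_range]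
  constructor
  · rintro ⟨t, ht, he⟩
    exact ⟨t, ht, he.symm⟩
  · rintro ⟨t, ht, he⟩
    exact ⟨t, ht, he.symm⟩

lemma val_sub_cast {u : ZMod k} {m : ℕ} (hm : m ≤ u.val) :
    (u - (m : ZMod k)).val = u.val - m := by
  obtain ⟨w, hwk, rfl⟩ : ∃ w, w < k ∧ u = ((w : ℕ) : ZMod k) :=
    ⟨u.val, ZMod.val_lt u, (castval u).symm⟩
  rw [ZMod.val_cast_of_lt hwk] at hm ⊢
  rw [← Nat.cast_sub hm, ZMod.val_cast_of_lt (by omega)]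

lemma val_sub_cast' {u : ZMod k} {m : ℕ} (h1 : u.val < m) (h2 : m ≤ k) :
    (u - (m : ZMod k)).val = u.val + k - m := by
  obtain ⟨w, hwk, rfl⟩ : ∃ w, w < k ∧ u = ((w : ℕ) : ZMod k) :=
    ⟨u.val, ZMod.val_lt u, (castval u).symm⟩
  rw [ZMod.val_cast_of_lt hwk] at h1 ⊢
  have key : ((w : ℕ) : ZMod k) - ((m : ℕ) : ZMod k) = ((w + k - m : ℕ) : ZMod k) := by
    rw [sub_eq_iff_eq_add, ← Nat.cast_add, show w + k - m + m = w + k by omega,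
      Nat.cast_add, ZMod.natCast_self, add_zero]
  rw [key, ZMod.val_cast_of_lt (by omega)]

lemma val_cast_sub {m : ℕ} (hm : m < k) (p : ZMod k) (h : p.val ≤ m) :
    ((m : ZMod k) - p).val = m - p.val := by
  obtain ⟨w, hwk, rfl⟩ : ∃ w, w < k ∧ p = ((w : ℕ) : ZMod k) :=
    ⟨p.val, ZMod.val_lt p, (castval p).symm⟩
  rw [ZMod.val_cast_of_lt hwk] at h ⊢
  rw [← Nat.cast_sub h, ZMod.val_cast_of_lt (by omega)]

lemma val_cast_sub' {m : ℕ} (hm : m < k) (p : ZMod k) (h : m < p.val) :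
    ((m : ZMod k) - p).val = k + m - p.val := by
  obtain ⟨w, hwk, rfl⟩ : ∃ w, w < k ∧ p = ((w : ℕ) : ZMod k) :=
    ⟨p.val, ZMod.val_lt p, (castval p).symm⟩
  rw [ZMod.val_cast_of_lt hwk] at h ⊢
  have key : ((m : ℕ) : ZMod k) - ((w : ℕ) : ZMod k) = ((k + m - w : ℕ) : ZMod k) := by
    rw [sub_eq_iff_eq_add, ← Nat.cast_add, show k + m - w + w = k + m by omega,
      Nat.cast_add, ZMod.natCast_self, zero_add]
  rw [key, ZMod.val_cast_of_lt (by omega)]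

lemma mem_arc_val {s x : ZMod k} {len : ℕ} (hlen : len ≤ k) :
    x ∈ arc s len ↔ (x - s).val < len := by
  rw [mem_arc]
  constructor
  · rintro ⟨t, ht, rfl⟩
    rw [add_sub_cancel_left, ZMod.val_cast_of_lt (by omega)]
    exact ht
  · intro h
    exact ⟨(x - s).val, h, by rw [castval]; ring⟩

lemma val_reflect_aux {len : ℕ} (h1 : 1 ≤ len) (h2 : len ≤ k) {u : ZMod k}
    (h : u.val < len) : (((len - 1 : ℕ) : ZMod k) - u).val < len := by
  rw [val_cast_sub (by omega) u (by omega)]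
  omega

lemma val_reflect {len : ℕ} (h1 : 1 ≤ len) (h2 : len ≤ k) {u : ZMod k} :
    u.val < len ↔ (((len - 1 : ℕ) : ZMod k) - u).val < len := by
  constructor
  · exact val_reflect_aux h1 h2
  · intro h
    have := val_reflect_aux h1 h2 h
    rwa [sub_sub_cancel] at this

lemma compl_arc {s : ZMod k} {len : ℕ} (h : len ≤ k) :
    (arc s len)ᶜ = arc (s + ((len : ℕ) : ZMod k)) (k - len) := by
  ext x
  rw [Finset.mem_compl, mem_arc_val h, mem_arc_val (by omega), not_lt]
  have e : x - (s + ((len : ℕ) : ZMod k)) = (x - s) - ((len : ℕ) : ZMod k) := by ring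
  rw [e]
  rcases le_or_gt len (x - s).val with hc | hc
  · rw [val_sub_cast hc]
    have := ZMod.val_lt (x - s)
    constructor <;> intro <;> omega
  · rw [val_sub_cast' hc h]
    constructor <;> intro <;> omega

/-- `S` is an arc of length `len`. -/
def IsArcLen (S : Finset (ZMod k)) (len : ℕ) : Prop := ∃ s, S = arc s len

lemma isArcLen_compl_iff {S : Finset (ZMod k)} {len : ℕ} (h : len ≤ k) :
    IsArcLen S len ↔ IsArcLen Sᶜ (k - len) := by
  constructor
  · rintro ⟨s, rfl⟩
    exact ⟨s + ((len : ℕ) : ZMod k), compl_arc h⟩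
  · rintro ⟨s, hs⟩
    refine ⟨s + (((k - len : ℕ) : ℕ) : ZMod k), ?_⟩
    have hcc := compl_arc (k := k) (s := s) (len := k - len) (by omega)
    rw [← hs, compl_compl] at hcc
    rw [hcc]
    congr 1
    omega

lemma isArcLen_iff_add {S T : Finset (ZMod k)} {len : ℕ} (hlen : len ≤ k) (c : ZMod k)
    (h : ∀ p, p ∈ T ↔ p + c ∈ S) : IsArcLen T len ↔ IsArcLen S len := by
  constructor
  · rintro ⟨u, hu⟩
    refine ⟨u + c, ?_⟩
    ext q
    rw [mem_arc_val hlen]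
    have hq := h (q - c)
    rw [sub_add_cancel] at hq
    rw [← hq, hu, mem_arc_val hlen]
    have e : q - c - u = q - (u + c) := by ring
    rw [e]
  · rintro ⟨s, hs⟩
    refine ⟨s - c, ?_⟩
    ext p
    rw [h p, hs, mem_arc_val hlen, mem_arc_val hlen]
    have e : p + c - s = p - (s - c) := by ring
    rw [e]

lemma isArcLen_iff_sub {S T : Finset (ZMod k)} {len : ℕ} (h1 : 1 ≤ len) (hlen : len ≤ k)
    (c : ZMod k) (h : ∀ p, p ∈ T ↔ c - p ∈ S) : IsArcLen T len ↔ IsArcLen S len := by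
  have h' : ∀ q, q ∈ S ↔ c - q ∈ T := by
    intro q
    have := h (c - q)
    rw [sub_sub_cancel] at this
    exact this.symm
  have main : ∀ (A B : Finset (ZMod k)), (∀ p, p ∈ B ↔ c - p ∈ A) →
      IsArcLen A len → IsArcLen B len := by
    rintro A B hAB ⟨s, hs⟩
    refine ⟨c - s - ((len - 1 : ℕ) : ZMod k), ?_⟩
    ext p
    rw [hAB p, hs, mem_arc_val hlen, mem_arc_val hlen, val_reflect h1 hlen]
    have e : ((len - 1 : ℕ) : ZMod k) - (c - p - s) = p - (c - s - ((len - 1 : ℕ) : ZMod k)) := by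
      ring
    rw [e]
  exact ⟨main T S h', main S T h⟩

lemma mem_arc_natCast {a len : ℕ} {p : ZMod k} (ha : 1 ≤ a) (hle : a + len ≤ k) :
    p ∈ arc ((a : ℕ) : ZMod k) len ↔ p.val ∈ Finset.Icc a (a + len - 1) := by
  rw [mem_arc, Finset.mem_Icc]
  constructor
  · rintro ⟨t, ht, rfl⟩
    rw [← Nat.cast_add, ZMod.val_cast_of_lt (by omega)]
    omega
  · rintro ⟨hb1, hb2⟩
    refine ⟨p.val - a, by omega, ?_⟩
    rw [← Nat.cast_add, show a + (p.val - a) = p.val by omega, castval]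

/-- The cyclic version of a one-line permutation. -/
def phat (k : ℕ) [NeZero k] (π : ℕ → ℕ) : ZMod k → ZMod k :=
  fun p => ((π p.val : ℕ) : ZMod k)

lemma pi_le (hk : 2 ≤ k) (hπ : OneLine k π) (x : ℕ) : π x ≤ k - 1 := by
  by_cases hx : x ∈ Set.Icc 1 (k - 1)
  · exact (Set.mem_Icc.mp (hπ.1.mapsTo hx)).2
  · rw [hπ.2 x hx]; omega

lemma phat_inj (hk : 2 ≤ k) (hπ : OneLine k π) : Function.Injective (phat k π) := by
  intro p q h
  have hpv := ZMod.val_lt p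
  have hqv := ZMod.val_lt q
  have h2 : π p.val = π q.val := by
    have hv := congrArg ZMod.val h
    simp only [phat] at hv
    rwa [ZMod.val_cast_of_lt (by have := pi_le hk hπ p.val; omega),
      ZMod.val_cast_of_lt (by have := pi_le hk hπ q.val; omega)] at hv
  apply ZMod.val_injective
  by_cases hp : p.val ∈ Set.Icc 1 (k - 1)
  · have h1 : 1 ≤ π p.val := (Set.mem_Icc.mp (hπ.1.mapsTo hp)).1
    have hq : q.val ∈ Set.Icc 1 (k - 1) := by
      by_contra hq
      rw [hπ.2 q.val hq] at h2; omega
    exact hπ.1.injOn hp hq h2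
  · have hq : q.val ∉ Set.Icc 1 (k - 1) := by
      intro hq
      have h1 : 1 ≤ π q.val := (Set.mem_Icc.mp (hπ.1.mapsTo hq)).1
      rw [hπ.2 p.val hp] at h2; omega
    rw [Set.mem_Icc] at hp hq
    omega

lemma posOf_spec (hπ : OneLine k π) {v : ℕ} (h1 : 1 ≤ v) (h2 : v ≤ k - 1) :
    1 ≤ posOf k π v ∧ posOf k π v ≤ k - 1 ∧ π (posOf k π v) = v := by
  obtain ⟨p, hp, hpv⟩ := hπ.1.surjOn (Set.mem_Icc.mpr ⟨h1, h2⟩)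
  rw [Set.mem_Icc] at hp
  have hne : ((Finset.Icc 1 (k - 1)).filter fun t => π t = v).Nonempty :=
    ⟨p, Finset.mem_filter.mpr ⟨Finset.mem_Icc.mpr ⟨hp.1, hp.2⟩, hpv⟩⟩
  have hmem := Finset.min'_mem _ hne
  rw [Finset.mem_filter, Finset.mem_Icc] at hmem
  unfold posOf
  rw [dif_pos hne]
  exact ⟨hmem.1.1, hmem.1.2, hmem.2⟩

lemma oneLine_of (hk : 2 ≤ k) {f : ℕ → ℕ}
    (h0 : ∀ p, p ∉ Set.Icc 1 (k - 1) → f p = 0)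
    (hm : Set.MapsTo f (Set.Icc 1 (k - 1)) (Set.Icc 1 (k - 1)))
    (hi : Set.InjOn f (Set.Icc 1 (k - 1))) : OneLine k f :=
  ⟨((Set.finite_Icc 1 (k - 1)).injOn_iff_bijOn_of_mapsTo hm).mp hi, h0⟩


lemma gpiEdge_iff (hk : 2 ≤ k) (hπ : OneLine k π) {i j : ℕ}
    (hi : 1 ≤ i) (hij : i < j) (hj : j ≤ k) :
    GpiEdge k π i j ↔
      IsArcLen (Finset.univ.filter fun p : ZMod k =>
        phat k π p ∈ arc ((i : ℕ) : ZMod k) (j - i)) (j - i) := by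
  have hT2 : ∀ p : ZMod k,
      (phat k π p ∈ arc ((i : ℕ) : ZMod k) (j - i) ↔ π p.val ∈ Finset.Icc i (j - 1)) := by
    intro p
    simp only [phat]
    rw [mem_arc, Finset.mem_Icc]
    constructor
    · rintro ⟨t, ht, he⟩
      rw [← Nat.cast_add] at he
      have he2 : π p.val = i + t := by
        have hv := congrArg ZMod.val he
        rwa [ZMod.val_cast_of_lt (by have := pi_le hk hπ p.val; omega),
          ZMod.val_cast_of_lt (by omega)] at hv
      omega
    · rintro ⟨ha, hb⟩
      refine ⟨π p.val - i, by omega, ?_⟩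
      rw [← Nat.cast_add]
      congr 1
      omega
  constructor
  · rintro ⟨a, ha1, ha2, himg⟩
    refine ⟨((a : ℕ) : ZMod k), ?_⟩
    ext p
    rw [Finset.mem_filter]
    simp only [Finset.mem_univ, true_and]
    rw [hT2 p, mem_arc_natCast ha1 ha2]
    have hpv := ZMod.val_lt p
    constructor
    · intro hv
      rw [← himg] at hv
      obtain ⟨q, hq, hqe⟩ := Finset.mem_image.mp hv
      have hq' := Finset.mem_Icc.mp hq
      have hpmem : p.val ∈ Set.Icc 1 (k - 1) := by
        by_contra hc
        rw [hπ.2 p.val hc] at hqe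
        have h1 : 1 ≤ π q :=
          (Set.mem_Icc.mp (hπ.1.mapsTo (Set.mem_Icc.mpr ⟨by omega, by omega⟩))).1
        omega
      have heq : q = p.val := hπ.1.injOn (Set.mem_Icc.mpr ⟨by omega, by omega⟩) hpmem hqe
      rw [Finset.mem_Icc]
      omega
    · intro hp
      rw [← himg]
      exact Finset.mem_image_of_mem π hp
  · rintro ⟨s, hs⟩
    obtain ⟨w, hwk, rfl⟩ : ∃ w, w < k ∧ s = ((w : ℕ) : ZMod k) :=
      ⟨s.val, ZMod.val_lt s, (castval s).symm⟩
    have hmem : ∀ p : ZMod k,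
        (π p.val ∈ Finset.Icc i (j - 1) ↔ p ∈ arc ((w : ℕ) : ZMod k) (j - i)) := by
      intro p
      have hp := Finset.ext_iff.mp hs p
      rw [Finset.mem_filter] at hp
      simp only [Finset.mem_univ, true_and] at hp
      rw [← hT2 p]
      exact hp
    have h0 : (0 : ZMod k) ∉ arc ((w : ℕ) : ZMod k) (j - i) := by
      rw [← hmem 0, ZMod.val_zero, hπ.2 0 (by simp [Set.mem_Icc]), Finset.mem_Icc]
      omega
    have hw0 : w ≠ 0 := by
      rintro rfl
      exact h0 (mem_arc.mpr ⟨0, by omega, by simp⟩)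
    have hwlen : w + (j - i) ≤ k := by
      by_contra hc
      apply h0
      rw [mem_arc]
      refine ⟨k - w, by omega, ?_⟩
      rw [← Nat.cast_add, show w + (k - w) = k by omega, ZMod.natCast_self]
    have hmem' : ∀ q, q < k →
        (π q ∈ Finset.Icc i (j - 1) ↔ q ∈ Finset.Icc w (w + (j - i) - 1)) := by
      intro q hq
      have hq2 := hmem ((q : ℕ) : ZMod k)
      rw [ZMod.val_cast_of_lt hq] at hq2
      rw [hq2, mem_arc_natCast (by omega) (by omega), ZMod.val_cast_of_lt hq]
    refine ⟨w, by omega, by omega, ?_⟩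
    apply Finset.Subset.antisymm
    · intro v hv
      obtain ⟨q, hq, rfl⟩ := Finset.mem_image.mp hv
      have hq' := Finset.mem_Icc.mp hq
      exact (hmem' q (by omega)).mpr hq
    · intro v hv
      have hv' := Finset.mem_Icc.mp hv
      obtain ⟨q, hqs, rfl⟩ := hπ.1.surjOn (Set.mem_Icc.mpr ⟨by omega, by omega⟩ :
        v ∈ Set.Icc 1 (k - 1))
      have hqs' := Set.mem_Icc.mp hqs
      exact Finset.mem_image_of_mem π ((hmem' q (by omega)).mp hv)

/-- Cyclic adjacency. -/
def CAdj (k : ℕ) [NeZero k] (π : ℕ → ℕ) (u v : ZMod k) : Prop :=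
  IsArcLen (Finset.univ.filter fun p : ZMod k => phat k π p ∈ arc u ((v - u).val))
    ((v - u).val)

lemma val_sub_add {u v : ZMod k} (h : u ≠ v) : (v - u).val + (u - v).val = k := by
  have e : (v - u) + (u - v) = 0 := by ring
  have hadd := ZMod.val_add (v - u) (u - v)
  rw [e, ZMod.val_zero] at hadd
  have b1 : (v - u).val ≠ 0 := by
    rw [Ne, ZMod.val_eq_zero]
    exact sub_ne_zero.mpr (Ne.symm h)
  have b2 : (u - v).val ≠ 0 := by
    rw [Ne, ZMod.val_eq_zero]
    exact sub_ne_zero.mpr h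
  have l1 := ZMod.val_lt (v - u)
  have l2 := ZMod.val_lt (u - v)
  rcases Nat.lt_or_ge ((v - u).val + (u - v).val) k with hc | hc
  · rw [Nat.mod_eq_of_lt hc] at hadd
    omega
  · rw [Nat.mod_eq_sub_mod hc, Nat.mod_eq_of_lt (by omega)] at hadd
    omega

lemma cadj_symm (u v : ZMod k) (h : u ≠ v) : CAdj k π u v ↔ CAdj k π v u := by
  have hsum := val_sub_add h
  have l1 := ZMod.val_lt (v - u)
  have b1 : (v - u).val ≠ 0 := by
    rw [Ne, ZMod.val_eq_zero]
    exact sub_ne_zero.mpr (Ne.symm h)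
  unfold CAdj
  rw [isArcLen_compl_iff (by omega : (v - u).val ≤ k)]
  have harc := compl_arc (k := k) (s := u) (len := (v - u).val) (by omega)
  have hb : u + (((v - u).val : ℕ) : ZMod k) = v := by rw [castval]; ring
  rw [hb] at harc
  have hc : (Finset.univ.filter fun p : ZMod k => phat k π p ∈ arc u ((v - u).val))ᶜ
      = Finset.univ.filter fun p : ZMod k => phat k π p ∈ arc v ((u - v).val) := by
    ext p
    rw [Finset.mem_compl, Finset.mem_filter, Finset.mem_filter]
    simp only [Finset.mem_univ, true_and]
    constructor
    · intro hn
      have hm : phat k π p ∈ (arc u ((v - u).val))ᶜ := Finset.mem_compl.mpr hn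
      rw [harc, show k - (v - u).val = (u - v).val by omega] at hm
      exact hm
    · intro hm hn
      have hm2 : phat k π p ∈ (arc u ((v - u).val))ᶜ := by
        rw [harc, show k - (v - u).val = (u - v).val by omega]
        exact hm
      exact (Finset.mem_compl.mp hm2) hn
  rw [hc, show k - (v - u).val = (u - v).val by omega]

lemma cast_ne_cast {i j : ℕ} (hi1 : 1 ≤ i) (hik : i ≤ k) (hj1 : 1 ≤ j) (hjk : j ≤ k)
    (hij : i ≠ j) : ((i : ℕ) : ZMod k) ≠ ((j : ℕ) : ZMod k) := by
  have hk1 : 1 ≤ k := Nat.one_le_iff_ne_zero.mpr (NeZero.ne k)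
  intro h
  have hv := congrArg ZMod.val h
  rw [ZMod.val_natCast, ZMod.val_natCast] at hv
  rcases eq_or_lt_of_le hik with rfl | hik'
  · rw [Nat.mod_self, Nat.mod_eq_of_lt (by omega)] at hv
    omega
  · rcases eq_or_lt_of_le hjk with rfl | hjk'
    · rw [Nat.mod_self, Nat.mod_eq_of_lt (by omega)] at hv
      omega
    · rw [Nat.mod_eq_of_lt hik', Nat.mod_eq_of_lt hjk'] at hv
      omega

lemma val_cast_diff {i j : ℕ} (hi1 : 1 ≤ i) (hij : i < j) (hjk : j ≤ k) :
    (((j : ℕ) : ZMod k) - ((i : ℕ) : ZMod k)).val = j - i := by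
  rw [← Nat.cast_sub (by omega)]
  exact ZMod.val_cast_of_lt (by omega)

lemma adjU_iff_cadj (hk : 2 ≤ k) (hπ : OneLine k π) {i j : ℕ}
    (hi1 : 1 ≤ i) (hik : i ≤ k) (hj1 : 1 ≤ j) (hjk : j ≤ k) (hij : i ≠ j) :
    GpiAdjU k π i j ↔ CAdj k π ((i : ℕ) : ZMod k) ((j : ℕ) : ZMod k) := by
  rcases Nat.lt_or_ge i j with hlt | hge
  · have hA : GpiAdjU k π i j ↔ GpiEdge k π i j := by
      unfold GpiAdjU
      constructor
      · rintro (⟨_, h⟩ | ⟨hh, _⟩)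
        · exact h
        · omega
      · intro h
        exact Or.inl ⟨hlt, h⟩
    rw [hA, gpiEdge_iff hk hπ hi1 hlt hjk]
    unfold CAdj
    rw [val_cast_diff hi1 hlt hjk]
  · have hlt : j < i := by omega
    have hA : GpiAdjU k π i j ↔ GpiEdge k π j i := by
      unfold GpiAdjU
      constructor
      · rintro (⟨hh, _⟩ | ⟨_, h⟩)
        · omega
        · exact h
      · intro h
        exact Or.inr ⟨hlt, h⟩
    rw [hA, gpiEdge_iff hk hπ hj1 hlt hik,
      cadj_symm ((i : ℕ) : ZMod k) ((j : ℕ) : ZMod k) (cast_ne_cast hi1 hik hj1 hjk hij)]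
    unfold CAdj
    rw [val_cast_diff hj1 hlt hik]


lemma rot_hat (hk : 2 ≤ k) (hπ : OneLine k π) (p : ZMod k) :
    ((rot k π p.val : ℕ) : ZMod k)
      = phat k π (p + ((posOf k π (k - 1) : ℕ) : ZMod k)) + 1 := by
  obtain ⟨ht1, ht2, ht3⟩ := posOf_spec hπ (v := k - 1) (by omega) le_rfl
  have hpv := ZMod.val_lt p
  simp only [rot, phat]
  set t := posOf k π (k - 1) with hT
  have hval : (p + ((t : ℕ) : ZMod k)).val = (p.val + t) % k := by
    rw [ZMod.val_add, ZMod.val_cast_of_lt (by omega)]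
  by_cases h0 : p.val = 0
  · rw [if_pos (by rw [h0]; simp [Finset.mem_Icc]), hval, h0]
    rw [Nat.zero_add, Nat.mod_eq_of_lt (by omega), ht3]
    have hfin : ((k - 1 : ℕ) : ZMod k) + 1 = 0 := by
      have h' : ((k - 1 : ℕ) : ZMod k) + ((1 : ℕ) : ZMod k) = ((k : ℕ) : ZMod k) := by
        rw [← Nat.cast_add]
        congr 1
        omega
      rw [Nat.cast_one, ZMod.natCast_self] at h'
      exact h'
    rw [hfin, Nat.cast_zero]
  · rw [if_neg (not_not_intro (Finset.mem_Icc.mpr ⟨by omega, by omega⟩))]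
    rcases lt_trichotomy p.val (k - t) with hc | hc | hc
    · rw [if_pos hc, hval, Nat.mod_eq_of_lt (by omega)]
      push_cast
      rw [Nat.add_comm p.val t]
    · rw [if_neg (by omega), if_pos hc, hval, show p.val + t = k by omega, Nat.mod_self]
      rw [hπ.2 0 (by simp [Set.mem_Icc])]
      simp
    · rw [if_neg (by omega), if_neg (by omega), hval,
        Nat.mod_eq_sub_mod (by omega), Nat.mod_eq_of_lt (by omega),
        show p.val + t - k = p.val - (k - t) by omega]
      push_cast
      ring

lemma srefl_hat (hk : 2 ≤ k) (hπ : OneLine k π) (p : ZMod k) :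
    ((srefl k π p.val : ℕ) : ZMod k)
      = 1 - phat k π (((posOf k π 1 : ℕ) : ZMod k) - p) := by
  obtain ⟨hi1, hi2, hi3⟩ := posOf_spec hπ (v := 1) le_rfl (by omega)
  have hpv := ZMod.val_lt p
  simp only [srefl, phat]
  set i₀ := posOf k π 1 with hI
  by_cases h0 : p.val = 0
  · have hp0 : p = 0 := by
      have := castval p
      rw [h0] at this
      simpa using this.symm
    rw [h0, hp0, sub_zero, if_pos (by simp [Finset.mem_Icc])]
    rw [ZMod.val_cast_of_lt (by omega), hi3]
    simp
  · rw [if_neg (not_not_intro (Finset.mem_Icc.mpr ⟨by omega, by omega⟩))]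
    rcases lt_trichotomy p.val i₀ with hc | hc | hc
    · rw [if_pos hc, val_cast_sub (by omega) p (by omega)]
      have harg := pi_le hk hπ (i₀ - p.val)
      rw [Nat.cast_sub (by omega), Nat.cast_add, ZMod.natCast_self, zero_add, Nat.cast_one]
    · rw [if_neg (by omega), if_pos hc]
      have hz : ((i₀ : ℕ) : ZMod k) - p = 0 := by
        rw [sub_eq_zero, ← castval p, hc]
      rw [hz, ZMod.val_zero, hπ.2 0 (by simp [Set.mem_Icc])]
      simp
    · rw [if_neg (by omega), if_neg (by omega), val_cast_sub' (by omega) p (by omega)]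
      have harg := pi_le hk hπ (k + i₀ - p.val)
      rw [Nat.cast_sub (by omega), Nat.cast_add, ZMod.natCast_self, zero_add, Nat.cast_one]

lemma oneLine_rot (hk : 2 ≤ k) (hπ : OneLine k π) : OneLine k (rot k π) := by
  obtain ⟨ht1, ht2, ht3⟩ := posOf_spec hπ (v := k - 1) (by omega) le_rfl
  apply oneLine_of hk
  · intro p hp
    simp only [rot]
    rw [if_pos (fun hc => hp (Set.mem_Icc.mpr (Finset.mem_Icc.mp hc)))]
  · intro p hp
    have hp' := Set.mem_Icc.mp hp
    simp only [rot]
    set t := posOf k π (k - 1) with hT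
    rw [if_neg (not_not_intro (Finset.mem_Icc.mpr ⟨by omega, by omega⟩))]
    rcases lt_trichotomy p (k - t) with hc | hc | hc
    · rw [if_pos hc]
      have harg : t + p ∈ Set.Icc 1 (k - 1) := Set.mem_Icc.mpr ⟨by omega, by omega⟩
      have hv := Set.mem_Icc.mp (hπ.1.mapsTo harg)
      have hne : π (t + p) ≠ k - 1 := by
        intro he
        have heq : t + p = t :=
          hπ.1.injOn harg (Set.mem_Icc.mpr ⟨by omega, by omega⟩) (he.trans ht3.symm)
        omega
      exact Set.mem_Icc.mpr ⟨by omega, by omega⟩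
    · rw [if_neg (by omega), if_pos hc]
      exact Set.mem_Icc.mpr ⟨le_rfl, by omega⟩
    · rw [if_neg (by omega), if_neg (by omega)]
      have harg : p - (k - t) ∈ Set.Icc 1 (k - 1) := Set.mem_Icc.mpr ⟨by omega, by omega⟩
      have hv := Set.mem_Icc.mp (hπ.1.mapsTo harg)
      have hne : π (p - (k - t)) ≠ k - 1 := by
        intro he
        have heq : p - (k - t) = t :=
          hπ.1.injOn harg (Set.mem_Icc.mpr ⟨by omega, by omega⟩) (he.trans ht3.symm)
        omega
      exact Set.mem_Icc.mpr ⟨by omega, by omega⟩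
  · intro p hp q hq he
    have hp' := Set.mem_Icc.mp hp
    have hq' := Set.mem_Icc.mp hq
    have hcp : ((p : ℕ) : ZMod k).val = p := ZMod.val_cast_of_lt (by omega)
    have hcq : ((q : ℕ) : ZMod k).val = q := ZMod.val_cast_of_lt (by omega)
    have h1 := rot_hat hk hπ ((p : ℕ) : ZMod k)
    have h2 := rot_hat hk hπ ((q : ℕ) : ZMod k)
    rw [hcp] at h1
    rw [hcq] at h2
    have h3 : phat k π (((p : ℕ) : ZMod k) + ((posOf k π (k - 1) : ℕ) : ZMod k)) + 1
        = phat k π (((q : ℕ) : ZMod k) + ((posOf k π (k - 1) : ℕ) : ZMod k)) + 1 := by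
      rw [← h1, ← h2, he]
    have h4 := phat_inj hk hπ (add_right_cancel h3)
    have h5 := add_right_cancel h4
    have h6 := congrArg ZMod.val h5
    rwa [hcp, hcq] at h6

lemma oneLine_srefl (hk : 2 ≤ k) (hπ : OneLine k π) : OneLine k (srefl k π) := by
  obtain ⟨hi1, hi2, hi3⟩ := posOf_spec hπ (v := 1) le_rfl (by omega)
  apply oneLine_of hk
  · intro p hp
    simp only [srefl]
    rw [if_pos (fun hc => hp (Set.mem_Icc.mpr (Finset.mem_Icc.mp hc)))]
  · intro p hp
    have hp' := Set.mem_Icc.mp hp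
    simp only [srefl]
    set i₀ := posOf k π 1 with hI
    rw [if_neg (not_not_intro (Finset.mem_Icc.mpr ⟨by omega, by omega⟩))]
    rcases lt_trichotomy p i₀ with hc | hc | hc
    · rw [if_pos hc]
      have harg : i₀ - p ∈ Set.Icc 1 (k - 1) := Set.mem_Icc.mpr ⟨by omega, by omega⟩
      have hv := Set.mem_Icc.mp (hπ.1.mapsTo harg)
      have hne : π (i₀ - p) ≠ 1 := by
        intro he
        have heq : i₀ - p = i₀ :=
          hπ.1.injOn harg (Set.mem_Icc.mpr ⟨by omega, by omega⟩) (he.trans hi3.symm)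
        omega
      exact Set.mem_Icc.mpr ⟨by omega, by omega⟩
    · rw [if_neg (by omega), if_pos hc]
      exact Set.mem_Icc.mpr ⟨le_rfl, by omega⟩
    · rw [if_neg (by omega), if_neg (by omega)]
      have harg : k + i₀ - p ∈ Set.Icc 1 (k - 1) := Set.mem_Icc.mpr ⟨by omega, by omega⟩
      have hv := Set.mem_Icc.mp (hπ.1.mapsTo harg)
      have hne : π (k + i₀ - p) ≠ 1 := by
        intro he
        have heq : k + i₀ - p = i₀ :=
          hπ.1.injOn harg (Set.mem_Icc.mpr ⟨by omega, by omega⟩) (he.trans hi3.symm)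
        omega
      exact Set.mem_Icc.mpr ⟨by omega, by omega⟩
  · intro p hp q hq he
    have hp' := Set.mem_Icc.mp hp
    have hq' := Set.mem_Icc.mp hq
    have hcp : ((p : ℕ) : ZMod k).val = p := ZMod.val_cast_of_lt (by omega)
    have hcq : ((q : ℕ) : ZMod k).val = q := ZMod.val_cast_of_lt (by omega)
    have h1 := srefl_hat hk hπ ((p : ℕ) : ZMod k)
    have h2 := srefl_hat hk hπ ((q : ℕ) : ZMod k)
    rw [hcp] at h1
    rw [hcq] at h2
    have h3 : (1 : ZMod k) - phat k π (((posOf k π 1 : ℕ) : ZMod k) - ((p : ℕ) : ZMod k))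
        = 1 - phat k π (((posOf k π 1 : ℕ) : ZMod k) - ((q : ℕ) : ZMod k)) := by
      rw [← h1, ← h2, he]
    have h4 := phat_inj hk hπ (sub_right_injective h3)
    have h5 := sub_right_injective h4
    have h6 := congrArg ZMod.val h5
    rwa [hcp, hcq] at h6


lemma cadj_rot (hk : 2 ≤ k) (hπ : OneLine k π) (u v : ZMod k) :
    CAdj k π u v ↔ CAdj k (rot k π) (u + 1) (v + 1) := by
  unfold CAdj
  rw [show v + 1 - (u + 1) = v - u by ring]
  have hLk : (v - u).val ≤ k := le_of_lt (ZMod.val_lt _)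
  symm
  apply isArcLen_iff_add hLk ((posOf k π (k - 1) : ℕ) : ZMod k)
  intro p
  rw [Finset.mem_filter, Finset.mem_filter]
  simp only [Finset.mem_univ, true_and]
  have hhat : phat k (rot k π) p
      = phat k π (p + ((posOf k π (k - 1) : ℕ) : ZMod k)) + 1 := rot_hat hk hπ p
  rw [hhat, mem_arc_val hLk, mem_arc_val hLk,
    show phat k π (p + ((posOf k π (k - 1) : ℕ) : ZMod k)) + 1 - (u + 1)
      = phat k π (p + ((posOf k π (k - 1) : ℕ) : ZMod k)) - u by ring]

lemma cadj_srefl (hk : 2 ≤ k) (hπ : OneLine k π) (u v : ZMod k) (huv : u ≠ v) :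
    CAdj k π u v ↔ CAdj k (srefl k π) (2 - u) (2 - v) := by
  have hsum := val_sub_add huv
  have b2 : (u - v).val ≠ 0 := by
    rw [Ne, ZMod.val_eq_zero]
    exact sub_ne_zero.mpr huv
  have l2 := ZMod.val_lt (u - v)
  rw [cadj_symm u v huv]
  unfold CAdj
  rw [show (2 : ZMod k) - v - (2 - u) = u - v by ring]
  symm
  apply isArcLen_iff_sub (by omega) (by omega) ((posOf k π 1 : ℕ) : ZMod k)
  intro p
  rw [Finset.mem_filter, Finset.mem_filter]
  simp only [Finset.mem_univ, true_and]
  have hhat : phat k (srefl k π) p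
      = 1 - phat k π (((posOf k π 1 : ℕ) : ZMod k) - p) := srefl_hat hk hπ p
  rw [hhat, mem_arc_val (by omega), mem_arc_val (by omega),
    val_reflect (by omega : 1 ≤ (u - v).val) (by omega : (u - v).val ≤ k)]
  have hmval : (((u - v).val : ℕ) : ZMod k) = u - v := castval _
  have hm1 : (((u - v).val - 1 : ℕ) : ZMod k) = (u - v) - 1 := by
    have h' : (((u - v).val - 1 : ℕ) : ZMod k) + ((1 : ℕ) : ZMod k)
        = (((u - v).val : ℕ) : ZMod k) := by
      rw [← Nat.cast_add]
      congr 1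
      omega
    rw [Nat.cast_one, hmval] at h'
    rw [eq_sub_iff_add_eq]
    exact h'
  have key : (((u - v).val - 1 : ℕ) : ZMod k)
        - (1 - phat k π (((posOf k π 1 : ℕ) : ZMod k) - p) - (2 - u))
      = phat k π (((posOf k π 1 : ℕ) : ZMod k) - p) - v := by
    rw [hm1]
    ring
  rw [key]

end Stmt10Aux

theorem stmt10 (k : ℕ) (hk : 2 ≤ k) (π : ℕ → ℕ) (hπ : OneLine k π) :
    ∀ i ∈ Finset.Icc 1 k, ∀ j ∈ Finset.Icc 1 k, i ≠ j →
      (GpiAdjU k π i j ↔ GpiAdjU k (rot k π) (rotV k i) (rotV k j)) ∧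
      (GpiAdjU k π i j ↔ GpiAdjU k (srefl k π) (sreflV k i) (sreflV k j)) := by
  haveI : NeZero k := ⟨by omega⟩
  intro i hi j hj hij
  rw [Finset.mem_Icc] at hi hj
  have hne := Stmt10Aux.cast_ne_cast (k := k) hi.1 hi.2 hj.1 hj.2 hij
  have hri : 1 ≤ rotV k i ∧ rotV k i ≤ k := by unfold rotV; split <;> omega
  have hrj : 1 ≤ rotV k j ∧ rotV k j ≤ k := by unfold rotV; split <;> omega
  have hrij : rotV k i ≠ rotV k j := by unfold rotV; split <;> split <;> omega
  have hcri : ((rotV k i : ℕ) : ZMod k) = ((i : ℕ) : ZMod k) + 1 := by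
    unfold rotV
    split
    · push_cast
      ring
    · have hik : i = k := by omega
      subst hik
      rw [Nat.cast_one, ZMod.natCast_self, zero_add]
  have hcrj : ((rotV k j : ℕ) : ZMod k) = ((j : ℕ) : ZMod k) + 1 := by
    unfold rotV
    split
    · push_cast
      ring
    · have hjk2 : j = k := by omega
      subst hjk2
      rw [Nat.cast_one, ZMod.natCast_self, zero_add]
  have hsi : 1 ≤ sreflV k i ∧ sreflV k i ≤ k := by unfold sreflV; split <;> omega
  have hsj : 1 ≤ sreflV k j ∧ sreflV k j ≤ k := by unfold sreflV; split <;> omega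
  have hsij : sreflV k i ≠ sreflV k j := by unfold sreflV; split <;> split <;> omega
  have hcsi : ((sreflV k i : ℕ) : ZMod k) = 2 - ((i : ℕ) : ZMod k) := by
    unfold sreflV
    split
    · rename_i h1
      subst h1
      have : ((2 : ℕ) : ZMod k) - ((1 : ℕ) : ZMod k) = ((1 : ℕ) : ZMod k) := by
        rw [← Nat.cast_sub (by omega)]
      rw [Nat.cast_one] at this ⊢
      rw [← this]
      norm_num
    · rw [Nat.cast_sub (by omega : i ≤ k + 2), Nat.cast_add, ZMod.natCast_self, zero_add]
      norm_num
  have hcsj : ((sreflV k j : ℕ) : ZMod k) = 2 - ((j : ℕ) : ZMod k) := by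
    unfold sreflV
    split
    · rename_i h1
      subst h1
      have : ((2 : ℕ) : ZMod k) - ((1 : ℕ) : ZMod k) = ((1 : ℕ) : ZMod k) := by
        rw [← Nat.cast_sub (by omega)]
      rw [Nat.cast_one] at this ⊢
      rw [← this]
      norm_num
    · rw [Nat.cast_sub (by omega : j ≤ k + 2), Nat.cast_add, ZMod.natCast_self, zero_add]
      norm_num
  constructor
  · rw [Stmt10Aux.adjU_iff_cadj hk hπ hi.1 hi.2 hj.1 hj.2 hij,
      Stmt10Aux.adjU_iff_cadj hk (Stmt10Aux.oneLine_rot hk hπ) hri.1 hri.2 hrj.1 hrj.2 hrij,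
      hcri, hcrj]
    exact Stmt10Aux.cadj_rot hk hπ _ _
  · rw [Stmt10Aux.adjU_iff_cadj hk hπ hi.1 hi.2 hj.1 hj.2 hij,
      Stmt10Aux.adjU_iff_cadj hk (Stmt10Aux.oneLine_srefl hk hπ) hsi.1 hsi.2 hsj.1 hsj.2 hsij,
      hcsi, hcsj]
    exact Stmt10Aux.cadj_srefl hk hπ _ _ hne

end
end

section
/- Let k ≥ 3 and let m be a positive integer with m ≤ (k−1)/2 and gcd(m,k) = 1. Let π ∈ 𝕊_{k−1} be an r-invariant permutation (r(π) = π) satisfying π_m = 1. Then cs_i(π) = k for all i ∈ {1,…,m−1}, and cs_m(π) = C(k,2) − (m−1)k. -/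
open Finset

attribute [local instance] Classical.propDecidable

noncomputable section

/-!
Rotation invariance together with `π m = 1` says that moving `m` places to the right, cyclically
with position `0` standing for the extra slot `k`, raises the entry by one; so the entry `j` sits at
position `j m mod k`. Hence an entry `s ∈ T_{a,b}` at position `p` ends a maximal block exactly when
`p + m mod k ∉ [a, b - 1]`, and for an interval of length `L = b - a` this happens for
`min(L, m, k - L)` positions. For `i < m` the pairs with `i` blocks are those with `b - a ∈ {i, k - i}`,
`k` of them; every pair has between `1` and `m` blocks, which gives `cs_m`.
-/

namespace OneLine

variable {k : ℕ} {π : ℕ → ℕ}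

theorem posOf_apply (hπ : OneLine k π) {p : ℕ} (hp : p ∈ Set.Icc 1 (k - 1)) :
    posOf k π (π p) = p := by
  have hfib : {t ∈ Icc 1 (k - 1) | π t = π p} = {p} := by
    ext t
    simp only [mem_filter, mem_singleton]
    constructor
    · rintro ⟨ht, hπt⟩
      exact hπ.1.injOn (by simpa using ht) hp hπt
    · rintro rfl
      exact ⟨by simpa using hp, rfl⟩
  simp [posOf, hfib]

theorem apply_mem_image_iff (hπ : OneLine k π) {I : Finset ℕ} (hI : I ⊆ Icc 1 (k - 1))
    {q : ℕ} (hq : q ∈ Set.Icc 1 (k - 1)) : π q ∈ I.image π ↔ q ∈ I := by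
  have := hπ.1.injOn.mem_image_iff (s₁ := (I : Set ℕ)) (fun x hx => by simpa using hI hx) hq
  simpa using this

theorem apply_sub_eq_of_rot_eq (hπ : OneLine k π) (hrot : rot k π = π) {m : ℕ}
    (hm : m ∈ Set.Icc 1 (k - 1)) (hm1 : π m = 1) : π (k - m) = k - 1 := by
  obtain ⟨hm0, hmk⟩ := hm
  obtain ⟨t, ht, hπt⟩ := hπ.1.surjOn (show k - 1 ∈ Set.Icc 1 (k - 1) from ⟨by omega, le_rfl⟩)
  have htop : posOf k π (k - 1) = t := hπt ▸ hπ.posOf_apply ht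
  obtain ⟨ht1, htk⟩ := ht
  have h1 : π (k - t) = 1 := by
    have := congrFun hrot (k - t)
    rw [rot, htop, if_neg (by simp only [mem_Icc, not_not]; omega), if_neg (by omega), if_pos rfl] at this
    exact this.symm
  have := hπ.1.injOn ⟨hm0, hmk⟩ ⟨by omega, by omega⟩ (hm1.trans h1.symm)
  rwa [show k - m = t by omega]

theorem apply_add_mod_of_rot_eq (hπ : OneLine k π) (hrot : rot k π = π) {m : ℕ}
    (hm : m ∈ Set.Icc 1 (k - 1)) (hm1 : π m = 1) {p : ℕ} (hp : p ∈ Set.Icc 1 (k - 1))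
    (hpm : p ≠ k - m) : π ((p + m) % k) = π p + 1 := by
  obtain ⟨hm0, hmk⟩ := hm
  obtain ⟨hp1, hpk⟩ := hp
  have htop : posOf k π (k - 1) = k - m := by
    rw [← hπ.apply_sub_eq_of_rot_eq hrot ⟨hm0, hmk⟩ hm1, hπ.posOf_apply ⟨by omega, by omega⟩]
  rcases hpm.lt_or_gt with hlt | hgt
  · rw [Nat.mod_eq_of_lt (by omega)]
    have := congrFun hrot (p + m)
    rw [rot, htop, if_neg (by simp only [mem_Icc, not_not]; omega), if_neg (by omega), if_neg (by omega)] at this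
    rw [← this]
    congr 2
    omega
  · rw [Nat.mod_eq_sub_mod (by omega), Nat.mod_eq_of_lt (by omega)]
    have := congrFun hrot (p + m - k)
    rw [rot, htop, if_neg (by simp only [mem_Icc, not_not]; omega), if_pos (by omega)] at this
    rw [← this]
    congr 2
    omega

theorem numBlocks_image_Icc_of_rot_eq (hπ : OneLine k π) (hrot : rot k π = π) {m : ℕ}
    (hm : m ∈ Set.Icc 1 (k - 1)) (hm1 : π m = 1) {a b : ℕ} (ha : 1 ≤ a) (hb : b ≤ k) :
    numBlocks ((Icc a (b - 1)).image π) = #{p ∈ Icc a (b - 1) | (p + m) % k ∉ Icc a (b - 1)} := by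
  set I := Icc a (b - 1)
  have hI : I ⊆ Icc 1 (k - 1) := fun p hp => by simp [I] at hp ⊢; omega
  rw [numBlocks, filter_image,
    card_image_of_injOn (hπ.1.injOn.mono fun p hp => by simpa using hI (mem_filter.1 hp).1)]
  refine congrArg card (filter_congr fun p hp => not_congr ?_)
  have hp : p ∈ Set.Icc 1 (k - 1) := by simpa using hI hp
  obtain ⟨hm0, hmk⟩ := hm
  by_cases hpm : p = k - m
  · have hnot : k ∉ I.image π := fun hk => by
      obtain ⟨q, hq, hπq⟩ := mem_image.1 hk
      have := hπ.1.mapsTo (by simpa using hI hq)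
      simp only [Set.mem_Icc] at this
      omega
    rw [hpm, hπ.apply_sub_eq_of_rot_eq hrot ⟨hm0, hmk⟩ hm1, Nat.sub_add_cancel (by omega),
      Nat.sub_add_cancel (by omega), Nat.mod_self]
    exact iff_of_false hnot (by simp only [I, mem_Icc]; omega)
  · have hq : (p + m) % k ∈ Set.Icc 1 (k - 1) := by
      obtain ⟨hp1, hpk⟩ := hp
      rcases lt_or_ge (p + m) k with hlt | hge
      · rw [Nat.mod_eq_of_lt hlt]; constructor <;> omega
      · rw [Nat.mod_eq_sub_mod hge, Nat.mod_eq_of_lt (by omega)]; constructor <;> omega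
    rw [← hπ.apply_add_mod_of_rot_eq hrot ⟨hm0, hmk⟩ hm1 hp hpm, hπ.apply_mem_image_iff hI hq]

end OneLine

/-- The number of maximal blocks of `T_{a,b}` with `b - a = L` when the entry `j` sits at
position `j m mod k`. -/
def blockCount (k m L : ℕ) : ℕ := min (min L m) (k - L)

theorem card_filter_add_mod_notMem_Icc {k m a b : ℕ} (hmk : 2 * m ≤ k) (ha : 1 ≤ a)
    (hab : a < b) (hb : b ≤ k) :
    #{p ∈ Icc a (b - 1) | (p + m) % k ∉ Icc a (b - 1)} = blockCount k m (b - a) := by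
  have hstay : {p ∈ Icc a (b - 1) | (p + m) % k ∈ Icc a (b - 1)}
      = Icc a (b - 1 - m) ∪ Icc (a + k - m) (b - 1) := by
    ext p
    simp only [mem_filter, mem_Icc, mem_union]
    by_cases hp : a ≤ p ∧ p ≤ b - 1
    · rcases lt_or_ge (p + m) k with hlt | hge
      · rw [Nat.mod_eq_of_lt hlt]; omega
      · rw [Nat.mod_eq_sub_mod hge, Nat.mod_eq_of_lt (by omega)]; omega
    · omega
  have hdisj : Disjoint (Icc a (b - 1 - m)) (Icc (a + k - m) (b - 1)) :=
    disjoint_left.2 fun p hp hp' => by simp only [mem_Icc] at hp hp'; omega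
  have hsum := card_filter_add_card_filter_not (s := Icc a (b - 1))
    (p := fun p => (p + m) % k ∈ Icc a (b - 1))
  rw [hstay, card_union_of_disjoint hdisj] at hsum
  simp only [Nat.card_Icc] at hsum
  unfold blockCount
  omega

theorem card_pairs_blockCount_eq_of_lt {k m i : ℕ} (hi : 1 ≤ i) (him : i < m) (hmk : 2 * m ≤ k) :
    #{p ∈ Icc 1 k ×ˢ Icc 1 k | p.1 < p.2 ∧ blockCount k m (p.2 - p.1) = i} = k := by
  conv_rhs => rw [← Nat.add_sub_cancel k 1, ← Nat.card_Icc 1 k]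
  -- pairs at distance `i` are counted by their left end, pairs at distance `k - i` by their right one
  refine card_nbij' (fun p => if p.2 - p.1 = i then p.1 else p.2)
    (fun a => if a + i ≤ k then (a, a + i) else (a + i - k, a)) ?_ ?_ ?_ ?_
  · rintro ⟨a, b⟩ hp
    simp only [mem_coe, mem_filter, mem_product, mem_Icc] at hp ⊢
    unfold blockCount at hp
    split <;> omega
  · intro a ha
    simp only [mem_coe, mem_filter, mem_product, mem_Icc] at ha ⊢
    unfold blockCount
    split <;> omega
  · rintro ⟨a, b⟩ hp
    simp only [mem_coe, mem_filter, mem_product, mem_Icc] at hp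
    unfold blockCount at hp
    by_cases hd : b - a = i
    · simp only [if_pos hd, if_pos (show a + i ≤ k by omega), Prod.mk.injEq, true_and]; omega
    · simp only [if_neg hd, if_neg (show ¬ b + i ≤ k by omega), Prod.mk.injEq, and_true]; omega
  · intro a ha
    simp only [mem_coe, mem_Icc] at ha
    by_cases hle : a + i ≤ k
    · simp only [if_pos hle, Nat.add_sub_cancel_left, if_true]
    · simp only [if_neg hle, if_neg (show a - (a + i - k) ≠ i by omega)]

theorem sum_card_pairs_blockCount_eq {k m : ℕ} (hm : 1 ≤ m) :
    ∑ i ∈ Icc 1 m, #{p ∈ Icc 1 k ×ˢ Icc 1 k | p.1 < p.2 ∧ blockCount k m (p.2 - p.1) = i}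
      = k.choose 2 := by
  have hpairs := card_product_filter_lt (s := Icc 1 k)
  rw [Nat.card_Icc, Nat.add_sub_cancel] at hpairs
  rw [← hpairs,
    card_eq_sum_card_fiberwise (f := fun p => blockCount k m (p.2 - p.1)) (t := Icc 1 m)]
  · simp only [filter_filter]
  · rintro ⟨a, b⟩ hp
    simp only [mem_coe, mem_filter, mem_product, mem_Icc] at hp ⊢
    unfold blockCount
    omega

theorem stmt11_general (k m : ℕ) (hm : 1 ≤ m) (hm2 : 2 * m ≤ k - 1)
    (π : ℕ → ℕ) (hπ : OneLine k π)
    (hrinv : rot k π = π) (hm1 : π m = 1) :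
    (∀ i, 1 ≤ i → i ≤ m - 1 → cs k π i = k) ∧
      cs k π m = Nat.choose k 2 - (m - 1) * k := by
  have hcs : ∀ i, cs k π i
      = #{p ∈ Icc 1 k ×ˢ Icc 1 k | p.1 < p.2 ∧ blockCount k m (p.2 - p.1) = i} := by
    refine fun i => congrArg card (filter_congr fun p hp => and_congr_right fun hlt => ?_)
    simp only [mem_product, mem_Icc] at hp
    rw [hπ.numBlocks_image_Icc_of_rot_eq hrinv ⟨hm, by omega⟩ hm1 hp.1.1 hp.2.2,
      card_filter_add_mod_notMem_Icc (by omega) hp.1.1 hlt hp.2.2]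
  have hsmall : ∀ i, 1 ≤ i → i ≤ m - 1 → cs k π i = k := fun i hi him =>
    (hcs i).trans (card_pairs_blockCount_eq_of_lt hi (by omega) (by omega))
  refine ⟨hsmall, ?_⟩
  have htotal := sum_card_pairs_blockCount_eq (k := k) hm
  rw [← Nat.sub_add_cancel hm, sum_Icc_succ_top (by omega), Nat.sub_add_cancel hm, ← hcs,
    sum_congr rfl fun i hi => ((hcs i).symm.trans (hsmall i (mem_Icc.1 hi).1 (mem_Icc.1 hi).2)),
    sum_const, Nat.card_Icc, Nat.add_sub_cancel, smul_eq_mul] at htotal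
  omega

theorem stmt11 (k m : ℕ) (hk : 3 ≤ k) (hm : 1 ≤ m) (hm2 : 2 * m ≤ k - 1)
    (hgcd : Nat.gcd m k = 1) (π : ℕ → ℕ) (hπ : OneLine k π)
    (hrinv : rot k π = π) (hm1 : π m = 1) :
    (∀ i, 1 ≤ i → i ≤ m - 1 → cs k π i = k) ∧
      cs k π m = Nat.choose k 2 - (m - 1) * k :=
  stmt11_general k m hm hm2 π hπ hrinv hm1
end
end

section
/- Let k ≥ 2, m ≥ 1 and let (A,B) be a sorted pair of m-element subsets of {1,…,k}. Then: (i) if k ∈ B \ A, the pair (ρ(B), ρ(A)) is sorted, and otherwise the pair (ρ(A), ρ(B)) is sorted; (ii) if 1 ∈ A \ B, the pair (σ(A), σ(B)) is sorted, and otherwise the pair (σ(B), σ(A)) is sorted. Here ρ(X) and σ(X) denote the images of a set X under ρ and σ respectively. -/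
open Finset

attribute [local instance] Classical.propDecidable

noncomputable section

/-- `(A,B)` is a sorted pair of `m`-element sets: `a₁ ≤ b₁ ≤ a₂ ≤ b₂ ≤ ⋯ ≤ a_m ≤ b_m`. -/
def SortedPair (m : ℕ) (A B : Finset ℕ) : Prop :=
  ∃ (hA : A.card = m) (hB : B.card = m),
    ∀ i : Fin m,
      A.orderEmbOfFin hA i ≤ B.orderEmbOfFin hB i ∧
        ∀ h : (i : ℕ) + 1 < m,
          (B.orderEmbOfFin hB i : ℕ) ≤ A.orderEmbOfFin hA ⟨(i : ℕ) + 1, h⟩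

/-!
A pair `(A, B)` of `m`-sets is sorted iff the counting functions `N_X t = #{x ∈ X | x ≤ t}`
interlace: `N_B ≤ N_A ≤ N_B + 1`. For `1 ≤ t < k` the rotation shifts them,
`N_{ρX} t = N_X (t - 1) + [k ∈ X]`, and the reflection reverses them,
`N_{σX} t = #X + [1 ∈ X] - N_X (k + 1 - t)`. Sortedness forces `[k ∈ A] ≤ [k ∈ B]` and
`[1 ∈ B] ≤ [1 ∈ A]`, and the interlacing survives, with `A` and `B` exchanged exactly when
those indicators differ (for `ρ`) or agree (for `σ`, which reverses the order).
-/

section OrderEmbOfFin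

-- An arbitrary `DecidableLE` instance, so that the lemmas also apply to classical filters.
variable {α : Type*} [LinearOrder α] [DecidableLE α]

theorem Finset.orderEmbOfFin_le_iff_lt_card_filter {s : Finset α} {m : ℕ} (h : #s = m)
    (i : Fin m) (t : α) :
    s.orderEmbOfFin h i ≤ t ↔ (i : ℕ) < #{x ∈ s | x ≤ t} := by
  set f := s.orderEmbOfFin h
  constructor
  · intro hit
    have hsub : (Iic i).map f.toEmbedding ⊆ {x ∈ s | x ≤ t} := by
      intro x hx
      obtain ⟨j, hj, rfl⟩ := mem_map.1 hx
      exact mem_filter.2 ⟨s.orderEmbOfFin_mem h j, (f.monotone (mem_Iic.1 hj)).trans hit⟩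
    simpa using card_le_card hsub
  · intro hlt
    by_contra! hti
    have hsub : {x ∈ s | x ≤ t} ⊆ (Iio i).map f.toEmbedding := by
      intro x hx
      obtain ⟨hxs, hxt⟩ := mem_filter.1 hx
      obtain ⟨j, rfl⟩ : x ∈ Set.range f := by rw [range_orderEmbOfFin]; exact hxs
      exact mem_map_of_mem _ (mem_Iio.2 (f.lt_iff_lt.1 (hxt.trans_lt hti)))
    simpa using hlt.trans_le (card_le_card hsub)

theorem Finset.forall_orderEmbOfFin_le_iff {X Y : Finset α} {m : ℕ} (hX : #X = m)
    (hY : #Y = m) (d : ℕ) :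
    (∀ i j : Fin m, (j : ℕ) = i + d → X.orderEmbOfFin hX i ≤ Y.orderEmbOfFin hY j) ↔
      ∀ t, #{y ∈ Y | y ≤ t} ≤ #{x ∈ X | x ≤ t} + d := by
  constructor
  · intro h t
    by_contra! hlt
    obtain ⟨n, hn⟩ : ∃ n, #{y ∈ Y | y ≤ t} = n + d + 1 :=
      ⟨#{y ∈ Y | y ≤ t} - (d + 1), by omega⟩
    have hYt : #{y ∈ Y | y ≤ t} ≤ m := hY ▸ card_le_card (filter_subset _ _)
    have hYj := (orderEmbOfFin_le_iff_lt_card_filter hY ⟨n + d, by omega⟩ t).2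
      (show n + d < _ by omega)
    have hXi := (orderEmbOfFin_le_iff_lt_card_filter hX ⟨n, by omega⟩ t).1
      ((h _ _ rfl).trans hYj)
    exact absurd hXi (show ¬n < _ by omega)
  · intro h i j hij
    have hYj := (orderEmbOfFin_le_iff_lt_card_filter hY j _).1 le_rfl
    have := h (Y.orderEmbOfFin hY j)
    exact (orderEmbOfFin_le_iff_lt_card_filter hX i _).2 (by omega)

end OrderEmbOfFin

theorem sortedPair_iff_card_filter_le {m : ℕ} {A B : Finset ℕ} :
    SortedPair m A B ↔ #A = m ∧ #B = m ∧
      ∀ t, #{x ∈ B | x ≤ t} ≤ #{x ∈ A | x ≤ t} ∧ #{x ∈ A | x ≤ t} ≤ #{x ∈ B | x ≤ t} + 1 := by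
  constructor
  · rintro ⟨hA, hB, h⟩
    have hAB := (forall_orderEmbOfFin_le_iff hA hB 0).1 fun i j hij => Fin.ext hij ▸ (h i).1
    have hBA := (forall_orderEmbOfFin_le_iff hB hA 1).1 fun i ⟨j, hj⟩ hij => by
      subst hij; exact (h i).2 hj
    exact ⟨hA, hB, fun t => ⟨hAB t, hBA t⟩⟩
  · rintro ⟨hA, hB, h⟩
    refine ⟨hA, hB, fun i => ⟨?_, fun hi => ?_⟩⟩
    · exact (forall_orderEmbOfFin_le_iff hA hB 0).2 (fun t => (h t).1) i i rfl
    · exact (forall_orderEmbOfFin_le_iff hB hA 1).2 (fun t => (h t).2) i ⟨i + 1, hi⟩ rfl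

theorem Finset.card_filter_image_of_injOn {α β : Type*} [DecidableEq β] {s : Finset α}
    {f : α → β} {p : β → Prop} [DecidablePred p] (hf : Set.InjOn f s) :
    #{y ∈ s.image f | p y} = #{x ∈ s | p (f x)} := by
  rw [filter_image, card_image_of_injOn (hf.mono (coe_subset.2 (filter_subset _ _)))]

theorem Finset.card_filter_eq_or {α : Type*} [DecidableEq α] {s : Finset α} {c : α}
    {p : α → Prop} [DecidablePred p] (hc : ¬p c) :
    #{x ∈ s | x = c ∨ p x} = #{x ∈ s | p x} + if c ∈ s then 1 else 0 := by
  rw [filter_or, card_union_of_disjoint (disjoint_filter.2 fun x _ hx => hx ▸ hc), filter_eq']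
  split_ifs <;> simp [add_comm]

theorem sortedPair_of_subset_Icc {k m : ℕ} {A B : Finset ℕ} (hA : A ⊆ Icc 1 k)
    (hB : B ⊆ Icc 1 k) (hcA : #A = m) (hcB : #B = m)
    (h : ∀ t, 1 ≤ t → t < k →
      #{x ∈ B | x ≤ t} ≤ #{x ∈ A | x ≤ t} ∧ #{x ∈ A | x ≤ t} ≤ #{x ∈ B | x ≤ t} + 1) :
    SortedPair m A B := by
  refine sortedPair_iff_card_filter_le.2 ⟨hcA, hcB, fun t => ?_⟩
  rcases Nat.eq_zero_or_pos t with rfl | ht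
  · have hzero : ∀ X ⊆ Icc 1 k, {x ∈ X | x ≤ 0} = ∅ := fun X hX =>
      filter_false_of_mem fun x hx => by have := mem_Icc.1 (hX hx); omega
    rw [hzero A hA, hzero B hB]
    simp
  rcases lt_or_ge t k with htk | htk
  · exact h t ht htk
  · have hall : ∀ X ⊆ Icc 1 k, {x ∈ X | x ≤ t} = X := fun X hX =>
      filter_true_of_mem fun x hx => (mem_Icc.1 (hX hx)).2.trans htk
    rw [hall A hA, hall B hB]
    omega

theorem sortedPair_image_of_subset_Icc {k m : ℕ} {f : ℕ → ℕ}
    (hmaps : Set.MapsTo f (Icc 1 k) (Icc 1 k)) (hinj : Set.InjOn f (Icc 1 k))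
    {X Y : Finset ℕ} (hX : X ⊆ Icc 1 k) (hY : Y ⊆ Icc 1 k) (hcX : #X = m) (hcY : #Y = m)
    (h : ∀ t, 1 ≤ t → t < k →
      #{y ∈ Y.image f | y ≤ t} ≤ #{x ∈ X.image f | x ≤ t} ∧
        #{x ∈ X.image f | x ≤ t} ≤ #{y ∈ Y.image f | y ≤ t} + 1) :
    SortedPair m (X.image f) (Y.image f) := by
  refine sortedPair_of_subset_Icc (image_subset_iff.2 fun x hx => hmaps (hX hx))
    (image_subset_iff.2 fun y hy => hmaps (hY hy)) ?_ ?_ h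
  · rw [card_image_of_injOn (hinj.mono hX), hcX]
  · rw [card_image_of_injOn (hinj.mono hY), hcY]

theorem rotV_mapsTo (k : ℕ) : Set.MapsTo (rotV k) (Icc 1 k) (Icc 1 k) := by
  intro x hx
  simp only [coe_Icc, Set.mem_Icc, rotV] at hx ⊢
  split_ifs <;> omega

theorem rotV_injOn (k : ℕ) : Set.InjOn (rotV k) (Icc 1 k) := by
  intro x hx y hy h
  simp only [coe_Icc, Set.mem_Icc, rotV] at hx hy h
  split_ifs at h <;> omega

theorem sreflV_mapsTo (k : ℕ) : Set.MapsTo (sreflV k) (Icc 1 k) (Icc 1 k) := by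
  intro x hx
  simp only [coe_Icc, Set.mem_Icc, sreflV] at hx ⊢
  split_ifs <;> omega

theorem sreflV_injOn (k : ℕ) : Set.InjOn (sreflV k) (Icc 1 k) := by
  intro x hx y hy h
  simp only [coe_Icc, Set.mem_Icc, sreflV] at hx hy h
  split_ifs at h <;> omega

theorem card_filter_image_rotV_le {k t : ℕ} {X : Finset ℕ} (hX : X ⊆ Icc 1 k) (ht : 1 ≤ t)
    (htk : t < k) :
    #{y ∈ X.image (rotV k) | y ≤ t} = #{x ∈ X | x ≤ t - 1} + if k ∈ X then 1 else 0 := by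
  rw [card_filter_image_of_injOn ((rotV_injOn k).mono hX),
    ← card_filter_eq_or (s := X) (p := (· ≤ t - 1)) (show ¬k ≤ t - 1 by omega)]
  congr 1
  refine filter_congr fun x hx => ?_
  have := mem_Icc.1 (hX hx)
  simp only [rotV]
  split_ifs <;> omega

theorem card_filter_image_sreflV_le_add {k t : ℕ} {X : Finset ℕ} (hX : X ⊆ Icc 1 k)
    (ht : 1 ≤ t) (htk : t < k) :
    #{y ∈ X.image (sreflV k) | y ≤ t} + #{x ∈ X | x ≤ k + 1 - t}
      = #X + if 1 ∈ X then 1 else 0 := by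
  have hsrefl : {x ∈ X | sreflV k x ≤ t} = {x ∈ X | x = 1 ∨ ¬x ≤ k + 1 - t} := by
    refine filter_congr fun x hx => ?_
    have := mem_Icc.1 (hX hx)
    simp only [sreflV]
    split_ifs <;> omega
  rw [card_filter_image_of_injOn ((sreflV_injOn k).mono hX), hsrefl,
    card_filter_eq_or (p := fun x => ¬x ≤ k + 1 - t) (show ¬¬1 ≤ k + 1 - t by omega),
    ← card_filter_add_card_filter_not (s := X) (· ≤ k + 1 - t)]
  omega

theorem SortedPair.image_rotV {k m : ℕ} {A B : Finset ℕ} (hA : A ⊆ Icc 1 k)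
    (hB : B ⊆ Icc 1 k) (hs : SortedPair m A B) :
    if k ∈ B ∧ k ∉ A then SortedPair m (B.image (rotV k)) (A.image (rotV k))
      else SortedPair m (A.image (rotV k)) (B.image (rotV k)) := by
  obtain ⟨hcA, hcB, hAB⟩ := sortedPair_iff_card_filter_le.1 hs
  -- the largest element of `A` is at most that of `B`
  have hkB : k ∈ A → k ∈ B := by
    intro hkA
    by_contra hkB
    have hBk : {x ∈ B | x ≤ k - 1} = B := filter_true_of_mem fun x hx => by
      have := mem_Icc.1 (hB hx)
      have := ne_of_mem_of_not_mem hx hkB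
      omega
    have hAk : #{x ∈ A | x ≤ k - 1} < #A :=
      card_lt_card (filter_ssubset.2 ⟨k, hkA, by have := mem_Icc.1 (hA hkA); omega⟩)
    have := (hAB (k - 1)).1
    rw [hBk] at this
    omega
  split_ifs with hk
  · refine sortedPair_image_of_subset_Icc (rotV_mapsTo k) (rotV_injOn k) hB hA hcB hcA
      fun t ht htk => ?_
    rw [card_filter_image_rotV_le hA ht htk, card_filter_image_rotV_le hB ht htk,
      if_pos hk.1, if_neg hk.2]
    have := hAB (t - 1)
    omega
  · refine sortedPair_image_of_subset_Icc (rotV_mapsTo k) (rotV_injOn k) hA hB hcA hcB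
      fun t ht htk => ?_
    have hkAB : k ∈ A ↔ k ∈ B := ⟨hkB, fun hkB => not_not.1 fun hkA => hk ⟨hkB, hkA⟩⟩
    rw [card_filter_image_rotV_le hA ht htk, card_filter_image_rotV_le hB ht htk]
    simp only [hkAB]
    have := hAB (t - 1)
    omega

theorem SortedPair.image_sreflV {k m : ℕ} {A B : Finset ℕ} (hA : A ⊆ Icc 1 k)
    (hB : B ⊆ Icc 1 k) (hs : SortedPair m A B) :
    if 1 ∈ A ∧ 1 ∉ B then SortedPair m (A.image (sreflV k)) (B.image (sreflV k))
      else SortedPair m (B.image (sreflV k)) (A.image (sreflV k)) := by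
  obtain ⟨hcA, hcB, hAB⟩ := sortedPair_iff_card_filter_le.1 hs
  -- the smallest element of `A` is at most that of `B`
  have h1A : 1 ∈ B → 1 ∈ A := by
    intro h1B
    have hpos : 0 < #{x ∈ B | x ≤ 1} := card_pos.2 ⟨1, mem_filter.2 ⟨h1B, le_rfl⟩⟩
    obtain ⟨a, ha⟩ := card_pos.1 (hpos.trans_le (hAB 1).1)
    obtain ⟨haA, ha1⟩ := mem_filter.1 ha
    obtain rfl : a = 1 := by have := mem_Icc.1 (hA haA); omega
    exact haA
  split_ifs with h1
  · refine sortedPair_image_of_subset_Icc (sreflV_mapsTo k) (sreflV_injOn k) hA hB hcA hcB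
      fun t ht htk => ?_
    have hA' := card_filter_image_sreflV_le_add hA ht htk
    have hB' := card_filter_image_sreflV_le_add hB ht htk
    rw [if_pos h1.1] at hA'
    rw [if_neg h1.2] at hB'
    have := hAB (k + 1 - t)
    omega
  · refine sortedPair_image_of_subset_Icc (sreflV_mapsTo k) (sreflV_injOn k) hB hA hcB hcA
      fun t ht htk => ?_
    have h1AB : 1 ∈ B ↔ 1 ∈ A := ⟨h1A, fun h1A => not_not.1 fun h1B => h1 ⟨h1A, h1B⟩⟩
    have hA' := card_filter_image_sreflV_le_add hA ht htk
    have hB' := card_filter_image_sreflV_le_add hB ht htk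
    simp only [h1AB] at hB'
    have := hAB (k + 1 - t)
    omega

theorem stmt12_general (k m : ℕ) (A B : Finset ℕ)
    (hA : A ⊆ Finset.Icc 1 k) (hB : B ⊆ Finset.Icc 1 k)
    (hs : SortedPair m A B) :
    (if k ∈ B ∧ k ∉ A then SortedPair m (B.image (rotV k)) (A.image (rotV k))
      else SortedPair m (A.image (rotV k)) (B.image (rotV k))) ∧
    (if 1 ∈ A ∧ 1 ∉ B then SortedPair m (A.image (sreflV k)) (B.image (sreflV k))
      else SortedPair m (B.image (sreflV k)) (A.image (sreflV k))) :=
  ⟨hs.image_rotV hA hB, hs.image_sreflV hA hB⟩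

theorem stmt12 (k m : ℕ) (hk : 2 ≤ k) (hm : 1 ≤ m) (A B : Finset ℕ)
    (hA : A ⊆ Finset.Icc 1 k) (hB : B ⊆ Finset.Icc 1 k)
    (hs : SortedPair m A B) :
    (if k ∈ B ∧ k ∉ A then SortedPair m (B.image (rotV k)) (A.image (rotV k))
      else SortedPair m (A.image (rotV k)) (B.image (rotV k))) ∧
    (if 1 ∈ A ∧ 1 ∉ B then SortedPair m (A.image (sreflV k)) (B.image (sreflV k))
      else SortedPair m (B.image (sreflV k)) (A.image (sreflV k))) :=
  stmt12_general k m A B hA hB hs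

end
end
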